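/- Let V be an n-dimensional real inner product space with orthonormal basis (e₁,…,eₙ). For symmetric endomorphisms S and D_k (k = 1,…,n) of V, the Clifford algebra element ½ Σ_{k,l} [D_k, S](eₗ)·eₖ·eₗ equals the image of the 3-form θ(X,Y,Z) = cyclic sum of ⟨[D_X, S]Y, Z⟩ under the standard embedding of Λ³V into the Clifford algebra, where D_X = Σₖ ⟨X,eₖ⟩ D_k. -/

import Mathlib

section Aux
variable {ι M : Type*} [Fintype ι] [AddCommMonoid M]

theorem cor32_sw12 (G : ι → ι → ι → M) :
    ∑ j, ∑ k, ∑ l, G j k l = ∑ j, ∑ k, ∑ l, G k j l :=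
  Finset.sum_comm

theorem cor32_sw23 (G : ι → ι → ι → M) :
    ∑ j, ∑ k, ∑ l, G j k l = ∑ j, ∑ k, ∑ l, G j l k :=
  Finset.sum_congr rfl fun _ _ => Finset.sum_comm

theorem cor32_cyc231 (G : ι → ι → ι → M) :
    ∑ j, ∑ k, ∑ l, G j k l = ∑ j, ∑ k, ∑ l, G k l j :=
  (cor32_sw23 G).trans (cor32_sw12 (fun j k l => G j l k))

theorem cor32_cyc312 (G : ι → ι → ι → M) :
    ∑ j, ∑ k, ∑ l, G j k l = ∑ j, ∑ k, ∑ l, G l j k :=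
  (cor32_sw12 G).trans (cor32_sw23 (fun j k l => G k j l))

theorem cor32_sw13 (G : ι → ι → ι → M) :
    ∑ j, ∑ k, ∑ l, G j k l = ∑ j, ∑ k, ∑ l, G l k j :=
  (cor32_cyc231 G).trans (cor32_sw23 (fun j k l => G k l j))

theorem cor32_six [LinearOrder ι] (K : ι → ι → ι → M)
    (h12 : ∀ j k l, j ≠ k → k ≠ l → j ≠ l → K j k l = K k j l)
    (h23 : ∀ j k l, j ≠ k → k ≠ l → j ≠ l → K j k l = K j l k)
    (hdiag : ∀ j k l, j = k ∨ k = l ∨ j = l → K j k l = 0) :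
    ∑ j, ∑ k, ∑ l, K j k l =
      (∑ j, ∑ k, ∑ l, if j < k ∧ k < l then K j k l else 0) +
      (∑ j, ∑ k, ∑ l, if j < k ∧ k < l then K j k l else 0) +
      (∑ j, ∑ k, ∑ l, if j < k ∧ k < l then K j k l else 0) +
      (∑ j, ∑ k, ∑ l, if j < k ∧ k < l then K j k l else 0) +
      (∑ j, ∑ k, ∑ l, if j < k ∧ k < l then K j k l else 0) +
      (∑ j, ∑ k, ∑ l, if j < k ∧ k < l then K j k l else 0) := by
  set g : ι → ι → ι → M := fun x y z => if x < y ∧ y < z then K x y z else 0 with hg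
  have key : ∀ j k l, K j k l =
      g j k l + g j l k + g k j l + g k l j + g l j k + g l k j := by
    intro j k l
    rcases eq_or_ne j k with rfl | hjk
    · rw [hdiag j j l (Or.inl rfl)]
      rcases lt_trichotomy j l with h | rfl | h
      · simp [hg, lt_irrefl, lt_asymm h]
      · simp [hg, lt_irrefl]
      · simp [hg, lt_irrefl, lt_asymm h]
    rcases eq_or_ne k l with rfl | hkl
    · rw [hdiag j k k (Or.inr (Or.inl rfl))]
      rcases lt_trichotomy j k with h | rfl | h
      · simp [hg, lt_irrefl, lt_asymm h]
      · simp [hg, lt_irrefl]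
      · simp [hg, lt_irrefl, lt_asymm h]
    rcases eq_or_ne j l with rfl | hjl
    · rw [hdiag j k j (Or.inr (Or.inr rfl))]
      rcases lt_trichotomy j k with h | rfl | h
      · simp [hg, lt_irrefl, lt_asymm h]
      · simp [hg, lt_irrefl]
      · simp [hg, lt_irrefl, lt_asymm h]
    rcases hjk.lt_or_gt with hab | hab <;> rcases hkl.lt_or_gt with hbc | hbc <;>
      rcases hjl.lt_or_gt with hac | hac
    · -- j < k < l
      simp [hg, hab, hbc, hac, lt_asymm hab, lt_asymm hbc, lt_asymm hac]
    · exact absurd (hab.trans hbc) (lt_asymm hac)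
    · -- j < l < k
      simp only [hg, hab, hbc, hac, lt_asymm hab, lt_asymm hbc, lt_asymm hac, and_true,
        true_and, and_false, false_and, if_true, if_false, add_zero, zero_add]
      exact h23 j k l hjk hkl hjl
    · -- l < j < k
      simp only [hg, hab, hbc, hac, lt_asymm hab, lt_asymm hbc, lt_asymm hac, and_true,
        true_and, and_false, false_and, if_true, if_false, add_zero, zero_add]
      exact (h23 j k l hjk hkl hjl).trans (h12 j l k hjl hkl.symm hjk)
    · -- k < j < l
      simp only [hg, hab, hbc, hac, lt_asymm hab, lt_asymm hbc, lt_asymm hac, and_true,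
        true_and, and_false, false_and, if_true, if_false, add_zero, zero_add]
      exact h12 j k l hjk hkl hjl
    · -- k < l < j
      simp only [hg, hab, hbc, hac, lt_asymm hab, lt_asymm hbc, lt_asymm hac, and_true,
        true_and, and_false, false_and, if_true, if_false, add_zero, zero_add]
      exact (h12 j k l hjk hkl hjl).trans (h23 k j l hjk.symm hjl hkl)
    · exact absurd (hbc.trans hab) (lt_asymm hac)
    · -- l < k < j
      simp only [hg, hab, hbc, hac, lt_asymm hab, lt_asymm hbc, lt_asymm hac, and_true,
        true_and, and_false, false_and, if_true, if_false, add_zero, zero_add]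
      exact ((h23 j k l hjk hkl hjl).trans (h12 j l k hjl hkl.symm hjk)).trans
        (h23 l j k hjl.symm hjk hkl.symm)
  calc ∑ j, ∑ k, ∑ l, K j k l
      = ∑ j, ∑ k, ∑ l, (g j k l + g j l k + g k j l + g k l j + g l j k + g l k j) :=
        Finset.sum_congr rfl fun j _ => Finset.sum_congr rfl fun k _ =>
          Finset.sum_congr rfl fun l _ => key j k l
    _ = _ := by
        simp only [Finset.sum_add_distrib]
        rw [← cor32_sw23 g, ← cor32_sw12 g, ← cor32_cyc231 g, ← cor32_cyc312 g, ← cor32_sw13 g]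

end Aux

/-- Corollary 3.2, pointwise algebraic version: for symmetric endomorphisms `S` and
`D k` (k = 1,…,n) of an n-dimensional real inner product space, the Clifford algebra
element `½ Σ_{k,l} ι([D k, S] eₗ) * ι eₖ * ι eₗ` equals the Clifford image of the 3-form
`Θ(e_j,e_k,e_l) = ⟨[D k,S]eₗ,e_j⟩ + ⟨[D j,S]eₖ,eₗ⟩ + ⟨[D l,S]e_j,eₖ⟩`, i.e. the sum over
`j < k < l` of these coefficients times `ι e_j * ι eₖ * ι eₗ`. -/
theorem stmt_12 {n : ℕ} {V : Type*} [NormedAddCommGroup V] [InnerProductSpace ℝ V]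
    [FiniteDimensional ℝ V]
    (b : OrthonormalBasis (Fin n) ℝ V)
    (Q : QuadraticForm ℝ V) (hQ : ∀ v, Q v = -(inner ℝ v v : ℝ))
    (S : V →ₗ[ℝ] V) (hS : S.IsSymmetric)
    (D : Fin n → (V →ₗ[ℝ] V)) (hD : ∀ k, (D k).IsSymmetric) :
    (1 / 2 : ℝ) • ∑ k : Fin n, ∑ l : Fin n,
        CliffordAlgebra.ι Q ((D k ∘ₗ S - S ∘ₗ D k) (b l)) *
          CliffordAlgebra.ι Q (b k) * CliffordAlgebra.ι Q (b l) =
      ∑ j : Fin n, ∑ k : Fin n, ∑ l : Fin n,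
        if j < k ∧ k < l then
          ((inner ℝ ((D k ∘ₗ S - S ∘ₗ D k) (b l)) (b j) : ℝ) +
           (inner ℝ ((D j ∘ₗ S - S ∘ₗ D j) (b k)) (b l) : ℝ) +
           (inner ℝ ((D l ∘ₗ S - S ∘ₗ D l) (b j)) (b k) : ℝ)) •
          (CliffordAlgebra.ι Q (b j) * CliffordAlgebra.ι Q (b k) * CliffordAlgebra.ι Q (b l))
        else 0 := by
  classical
  set e : Fin n → CliffordAlgebra Q := fun j => CliffordAlgebra.ι Q (b j) with he
  set a : Fin n → Fin n → Fin n → ℝ :=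
    fun j k l => (inner ℝ ((D k ∘ₗ S - S ∘ₗ D k) (b l)) (b j) : ℝ) with haDef
  set P : Fin n → Fin n → Fin n → CliffordAlgebra Q := fun j k l => e j * e k * e l with hP
  set F : Fin n → Fin n → Fin n → CliffordAlgebra Q := fun j k l => a j k l • P j k l with hF
  -- basic Clifford facts
  have hpolar : ∀ x y : V, QuadraticMap.polar Q x y = -2 * (inner ℝ x y : ℝ) := by
    intro x y
    simp only [QuadraticMap.polar, hQ, real_inner_add_add_self]
    ring
  have hanti : ∀ {j k : Fin n}, j ≠ k → e j * e k = -(e k * e j) := by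
    intro j k h
    have h0 := CliffordAlgebra.ι_mul_ι_add_swap (Q := Q) (b j) (b k)
    rw [hpolar, b.orthonormal.2 h, mul_zero, map_zero] at h0
    simp only [he]
    linear_combination (norm := abel) h0
  have hsq : ∀ k : Fin n, e k * e k = -1 := by
    intro k
    simp only [he]
    rw [CliffordAlgebra.ι_sq_scalar, hQ, real_inner_self_eq_norm_sq, b.orthonormal.1 k]
    norm_num
  -- antisymmetry of the coefficients
  have ha : ∀ j k l, a j k l = -a l k j := by
    intro j k l
    have e1 : (inner ℝ (D k (S (b l))) (b j) : ℝ) = inner ℝ (b l) (S (D k (b j))) := by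
      rw [hD k, hS]
    have e2 : (inner ℝ (S (D k (b l))) (b j) : ℝ) = inner ℝ (b l) (D k (S (b j))) := by
      rw [hS, hD k]
    simp only [haDef, LinearMap.sub_apply, LinearMap.comp_apply, inner_sub_left]
    rw [e1, e2, real_inner_comm (D k (S (b j))) (b l), real_inner_comm (S (D k (b j))) (b l)]
    ring
  have ha0 : ∀ j k, a j k j = 0 := by
    intro j k
    have := ha j k j
    linarith
  -- products of basis vectors
  have hPcyc : ∀ {x y z : Fin n}, x ≠ y → y ≠ z → x ≠ z → P y z x = P x y z := by
    intro x y z hxy hyz hxz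
    simp only [hP]
    calc e y * e z * e x = e y * (e z * e x) := mul_assoc _ _ _
      _ = e y * (-(e x * e z)) := by rw [hanti (fun h => hxz h.symm)]
      _ = -(e y * e x * e z) := by rw [mul_neg, mul_assoc]
      _ = -(-(e x * e y) * e z) := by rw [hanti (fun h => hxy h.symm)]
      _ = e x * e y * e z := by rw [neg_mul, neg_neg]
  have hPrev : ∀ {x y z : Fin n}, x ≠ y → y ≠ z → x ≠ z → P z y x = -P x y z := by
    intro x y z hxy hyz hxz
    have h1 : P z y x = -(P y z x) := by
      simp only [hP]
      rw [show e z * e y = -(e y * e z) from hanti (fun h => hyz h.symm), neg_mul]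
    rw [h1, hPcyc hxy hyz hxz]
  have hPjjl : ∀ j l : Fin n, P j j l = -(e l) := by
    intro j l
    simp only [hP]
    rw [hsq j, neg_one_mul]
  have hPljj : ∀ l j : Fin n, P l j j = -(e l) := by
    intro l j
    simp only [hP]
    rw [mul_assoc, hsq j, mul_neg_one]
  -- reversal invariance of F on distinct triples
  have hFrev : ∀ {x y z : Fin n}, x ≠ y → y ≠ z → x ≠ z → F z y x = F x y z := by
    intro x y z hxy hyz hxz
    simp only [hF]
    rw [hPrev hxy hyz hxz, show a z y x = -a x y z from by rw [ha x y z, neg_neg],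
      neg_smul_neg]
  -- the symmetrized summand
  set K : Fin n → Fin n → Fin n → CliffordAlgebra Q :=
    fun j k l => F j k l + F k l j + F l j k with hK
  have h12 : ∀ j k l : Fin n, j ≠ k → k ≠ l → j ≠ l → K j k l = K k j l := by
    intro j k l hjk hkl hjl
    simp only [hK]
    rw [show F k j l = F l j k from hFrev hjl.symm hjk hkl.symm,
      show F j l k = F k l j from hFrev hkl hjl.symm hjk.symm,
      show F l k j = F j k l from hFrev hjk hkl hjl]
    abel
  have h23 : ∀ j k l : Fin n, j ≠ k → k ≠ l → j ≠ l → K j k l = K j l k := by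
    intro j k l hjk hkl hjl
    simp only [hK]
    rw [show F j l k = F k l j from hFrev hkl hjl.symm hjk.symm,
      show F l k j = F j k l from hFrev hjk hkl hjl,
      show F k j l = F l j k from hFrev hjl.symm hjk hkl.symm]
    abel
  have hdiag : ∀ j k l : Fin n, j = k ∨ k = l ∨ j = l → K j k l = 0 := by
    intro j k l h
    rcases h with rfl | rfl | rfl
    · -- j = k
      simp only [hK, hF]
      rw [ha0 j l, zero_smul, hPjjl j l, hPljj l j,
        show a l j j = -a j j l from by rw [ha j j l, neg_neg], neg_smul]
      abel
    · -- k = l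
      simp only [hK, hF]
      rw [ha0 k j, zero_smul,
        show P j k k = -(e j) from by simp only [hP]; rw [mul_assoc, hsq k, mul_neg_one],
        hPjjl k j, show a k k j = -a j k k from by rw [ha j k k, neg_neg], neg_smul]
      abel
    · -- j = l
      simp only [hK, hF]
      rw [ha0 j k, zero_smul, hPljj k j, hPjjl j k,
        show a j j k = -a k j j from by rw [ha k j j, neg_neg], neg_smul]
      abel
  -- expansion of the left-hand side
  have hexp : ∀ k l : Fin n,
      CliffordAlgebra.ι Q ((D k ∘ₗ S - S ∘ₗ D k) (b l)) *
        CliffordAlgebra.ι Q (b k) * CliffordAlgebra.ι Q (b l) = ∑ j, F j k l := by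
    intro k l
    have hv : CliffordAlgebra.ι Q ((D k ∘ₗ S - S ∘ₗ D k) (b l)) = ∑ j, a j k l • e j := by
      conv_lhs => rw [← b.sum_repr' ((D k ∘ₗ S - S ∘ₗ D k) (b l))]
      rw [map_sum]
      refine Finset.sum_congr rfl fun j _ => ?_
      rw [map_smul, real_inner_comm]
    rw [hv, Finset.sum_mul, Finset.sum_mul]
    refine Finset.sum_congr rfl fun j _ => ?_
    rw [smul_mul_assoc, smul_mul_assoc]
  set T : CliffordAlgebra Q := ∑ j, ∑ k, ∑ l, F j k l with hT
  have hLHS : ∑ k : Fin n, ∑ l : Fin n,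
      CliffordAlgebra.ι Q ((D k ∘ₗ S - S ∘ₗ D k) (b l)) *
        CliffordAlgebra.ι Q (b k) * CliffordAlgebra.ι Q (b l) = T := by
    rw [hT]
    calc (∑ k : Fin n, ∑ l : Fin n, CliffordAlgebra.ι Q ((D k ∘ₗ S - S ∘ₗ D k) (b l)) *
            CliffordAlgebra.ι Q (b k) * CliffordAlgebra.ι Q (b l))
        = ∑ k : Fin n, ∑ l : Fin n, ∑ j : Fin n, F j k l :=
          Finset.sum_congr rfl fun k _ => Finset.sum_congr rfl fun l _ => hexp k l
      _ = ∑ j, ∑ k, ∑ l, F j k l := cor32_cyc231 (fun x y z => F z x y)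
  -- the right-hand side
  set R : CliffordAlgebra Q := ∑ j : Fin n, ∑ k : Fin n, ∑ l : Fin n,
      if j < k ∧ k < l then
        ((inner ℝ ((D k ∘ₗ S - S ∘ₗ D k) (b l)) (b j) : ℝ) +
         (inner ℝ ((D j ∘ₗ S - S ∘ₗ D j) (b k)) (b l) : ℝ) +
         (inner ℝ ((D l ∘ₗ S - S ∘ₗ D l) (b j)) (b k) : ℝ)) •
        (CliffordAlgebra.ι Q (b j) * CliffordAlgebra.ι Q (b k) * CliffordAlgebra.ι Q (b l))
      else 0 with hR
  have hKR : ∑ j, ∑ k, ∑ l, (if j < k ∧ k < l then K j k l else 0) = R := by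
    rw [hR]
    refine Finset.sum_congr rfl fun j _ => Finset.sum_congr rfl fun k _ =>
      Finset.sum_congr rfl fun l _ => ?_
    by_cases h : j < k ∧ k < l
    · rw [if_pos h, if_pos h]
      have hjk : j ≠ k := ne_of_lt h.1
      have hkl : k ≠ l := ne_of_lt h.2
      have hjl : j ≠ l := ne_of_lt (h.1.trans h.2)
      have hc1 : P k l j = P j k l := hPcyc hjk hkl hjl
      have hc2 : P l j k = P j k l := by
        rw [show P l j k = P k l j from hPcyc hkl hjl.symm hjk.symm, hc1]
      simp only [hK, hF]
      rw [hc1, hc2, ← add_smul, ← add_smul]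
      have hcoef : a j k l + a k l j + a l j k =
          (inner ℝ ((D k ∘ₗ S - S ∘ₗ D k) (b l)) (b j) : ℝ) +
          (inner ℝ ((D j ∘ₗ S - S ∘ₗ D j) (b k)) (b l) : ℝ) +
          (inner ℝ ((D l ∘ₗ S - S ∘ₗ D l) (b j)) (b k) : ℝ) := by
        simp only [haDef]
        ring
      rw [hcoef]
    · rw [if_neg h, if_neg h]
  -- put everything together
  have hsix := cor32_six K h12 h23 hdiag
  have hKT : ∑ j, ∑ k, ∑ l, K j k l = T + T + T := by
    simp only [hK, Finset.sum_add_distrib]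
    rw [← cor32_cyc231 F, ← cor32_cyc312 F, ← hT]
  rw [hKT, hKR] at hsix
  rw [hLHS]
  have h36 : (3 : ℝ) • T = (6 : ℝ) • R := by
    rw [show (3 : ℝ) = 1 + 1 + 1 by norm_num, add_smul, add_smul, one_smul,
      show (6 : ℝ) = 1 + 1 + 1 + 1 + 1 + 1 by norm_num, add_smul, add_smul, add_smul,
      add_smul, add_smul, one_smul]
    exact hsix
  have hT2 : T = (2 : ℝ) • R := by
    have := congrArg (fun x => (3⁻¹ : ℝ) • x) h36
    simp only [smul_smul] at this
    norm_num at this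
    exact this
  rw [hT2, smul_smul]
  norm_num
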